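/- arXiv:2207.03250 — 3 statements merged into one kernel-verified Lean document; each statement's English description precedes it below -/
import Mathlib

section
/- For every positive integer $i$, the finite convolution identity $\sum_{k=1}^{i-1} \frac{H_k}{i-k} = H_i^2 - H_i^{(2)}$ holds. -/
open Real

noncomputable def H (n k : ℕ) : ℝ := ∑ i ∈ Finset.Icc 1 k, 1 / (i : ℝ) ^ n

noncomputable def h (n k : ℕ) : ℝ := ∑ i ∈ Finset.Icc 1 k, 1 / (2 * (i : ℝ) - 1) ^ n

noncomputable def zeta (s : ℕ) : ℝ := ∑' n : ℕ, 1 / ((n : ℝ) + 1) ^ s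

/-!
Both sides vanish at `i = 0` and grow by `2 H_i / (i + 1)` from `i` to `i + 1`. For the right-hand
side this is `(H_i + 1/(i+1))² - 1/(i+1)² = H_i² + 2 H_i/(i+1)`. In the convolution, writing
`H_{k+1} = H_k + 1/(k+1)` splits off the convolution at `i` plus `∑_{k<i} 1/((k+1)(i-k))`, and the
partial fractions `1/((k+1)(i-k)) = (1/(k+1) + 1/(i-k))/(i+1)` turn the latter into `2 H_i/(i+1)`.
-/

open Finset

lemma H_eq_sum_range (n k : ℕ) : H n k = ∑ j ∈ range k, 1 / ((j : ℝ) + 1) ^ n := by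
  rw [H, range_eq_Ico, ← Ico_add_one_right_eq_Icc, ← zero_add 1, ← sum_Ico_add']
  simp

lemma H_zero (n : ℕ) : H n 0 = 0 := by
  simp [H]

lemma H_succ (n k : ℕ) : H n (k + 1) = H n k + 1 / ((k : ℝ) + 1) ^ n := by
  simp only [H_eq_sum_range, sum_range_succ]

lemma sum_range_one_div_sub (k : ℕ) : ∑ j ∈ range k, 1 / ((k : ℝ) - j) = H 1 k := by
  rw [H_eq_sum_range, ← sum_range_reflect]
  refine sum_congr rfl fun j hj => ?_
  have hjk := mem_range.1 hj
  rw [Nat.cast_sub (by omega), Nat.cast_sub (by omega)]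
  ring_nf

lemma sum_range_one_div_mul (i : ℕ) :
    ∑ k ∈ range i, 1 / (((k : ℝ) + 1) * (i - k)) = 2 * H 1 i / (i + 1) := by
  have partial_fractions : ∀ k ∈ range i,
      1 / (((k : ℝ) + 1) * (i - k)) = (1 / ((k : ℝ) + 1) + 1 / ((i : ℝ) - k)) / (i + 1) := by
    intro k hk
    have : (k : ℝ) < i := by exact_mod_cast mem_range.1 hk
    field_simp [sub_ne_zero.2 this.ne']
    ring
  rw [sum_congr rfl partial_fractions, ← sum_div, sum_add_distrib, sum_range_one_div_sub]
  simp only [H_eq_sum_range, pow_one]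
  ring

lemma sum_range_H_div_succ (i : ℕ) :
    ∑ k ∈ range (i + 1), H 1 k / ((i : ℝ) + 1 - k) =
      ∑ k ∈ range i, H 1 k / ((i : ℝ) - k) + 2 * H 1 i / (i + 1) := by
  rw [sum_range_succ', H_zero, zero_div, add_zero, ← sum_range_one_div_mul, ← sum_add_distrib]
  refine sum_congr rfl fun k hk => ?_
  have : (k : ℝ) < i := by exact_mod_cast mem_range.1 hk
  rw [H_succ, Nat.cast_succ, add_sub_add_right_eq_sub, pow_one]
  field_simp [sub_ne_zero.2 this.ne']

lemma H_one_sq_sub_H_two_succ (i : ℕ) :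
    H 1 (i + 1) ^ 2 - H 2 (i + 1) = H 1 i ^ 2 - H 2 i + 2 * H 1 i / (i + 1) := by
  rw [H_succ, H_succ]
  field_simp
  ring

lemma sum_range_H_div (i : ℕ) :
    ∑ k ∈ range i, H 1 k / ((i : ℝ) - k) = H 1 i ^ 2 - H 2 i := by
  induction i with
  | zero => simp [H_zero]
  | succ i ih => rw [Nat.cast_succ, sum_range_H_div_succ, ih, H_one_sq_sub_H_two_succ]

theorem stmt3_general (i : ℕ) :
    ∑ k ∈ Finset.Icc 1 (i - 1), H 1 k / ((i : ℝ) - k) = H 1 i ^ 2 - H 2 i := by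
  rw [← sum_range_H_div]
  refine sum_subset (fun k hk => ?_) fun k hk hk' => ?_
  · simp only [mem_Icc] at hk
    exact mem_range.2 (by omega)
  · obtain rfl : k = 0 := by
      simp only [mem_range, mem_Icc, not_and, not_le] at hk hk'
      omega
    simp [H_zero]

theorem stmt3 (i : ℕ) (hi : 0 < i) :
    ∑ k ∈ Finset.Icc 1 (i - 1), H 1 k / ((i : ℝ) - k) = H 1 i ^ 2 - H 2 i :=
  stmt3_general i
end

section
/- For every positive integer $i$, $\sum_{k=1}^{\infty} \frac{H_k}{k(i+k)} = \frac{\zeta(2)}{i} + \frac{1}{i}\sum_{k=1}^{i-1} \frac{H_k}{k}$. -/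
open Real

/-!
Expanding `H_k = ∑_{j ≤ k} 1/j` turns the series into a double series of nonnegative terms
`1/(j k (k + i))` over `j ≤ k`. Summing over `k ≥ j` first, the partial fractions
`1/(k (k + i)) = (1/k - 1/(k + i))/i` telescope to `(1/i) ∑_{t < i} 1/(j + t)`, so the series
equals `(1/i) ∑_{t < i} ∑_j 1/(j (j + t))`. The term `t = 0` is `ζ(2)`, and for `t > 0` the inner
series telescopes once more, to `H_t / t`.
-/

open Filter Topology Finset

theorem hasSum_sub_succ_of_antitone {f : ℕ → ℝ} (hf : Antitone f)
    (hlim : Tendsto f atTop (𝓝 0)) : HasSum (fun n => f n - f (n + 1)) (f 0) := by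
  refine (hasSum_iff_tendsto_nat_of_nonneg (fun n => sub_nonneg.2 (hf n.le_succ)) _).2 ?_
  simp_rw [sum_range_sub']
  simpa using (tendsto_const_nhds (x := f 0)).sub hlim

theorem hasSum_sub_add_of_antitone {f : ℕ → ℝ} (hf : Antitone f)
    (hlim : Tendsto f atTop (𝓝 0)) (i : ℕ) :
    HasSum (fun n => f n - f (n + i)) (∑ t ∈ range i, f t) := by
  have hshift (t : ℕ) : HasSum (fun n => f (n + t) - f (n + t + 1)) (f t) := by
    simpa [add_right_comm] using
      hasSum_sub_succ_of_antitone (fun m n hmn => hf (Nat.add_le_add_right hmn t))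
        ((tendsto_add_atTop_iff_nat t).2 hlim)
  convert hasSum_sum fun t (_ : t ∈ range i) => hshift t using 1
  funext n
  simpa [add_assoc] using (sum_range_sub' (fun t => f (n + t)) i).symm

theorem hasSum_one_div_mul_add_nat {a : ℝ} (ha : 0 < a) {i : ℕ} (hi : 0 < i) :
    HasSum (fun m : ℕ => 1 / ((a + m) * (a + m + i))) ((∑ t ∈ range i, 1 / (a + t)) / i) := by
  have hanti : Antitone fun m : ℕ => 1 / (a + m) := fun m n hmn =>
    one_div_le_one_div_of_le (by positivity) (by gcongr)
  have hlim : Tendsto (fun m : ℕ => 1 / (a + m)) atTop (𝓝 0) :=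
    tendsto_const_nhds.div_atTop (tendsto_atTop_add_const_left _ a tendsto_natCast_atTop_atTop)
  refine ((hasSum_sub_add_of_antitone hanti hlim i).div_const (i : ℝ)).congr_fun fun m => ?_
  have : (0 : ℝ) < i := by exact_mod_cast hi
  have : 0 < a + m := by positivity
  push_cast
  field_simp
  ring

theorem H_one_eq_sum_range (n : ℕ) : H 1 n = ∑ j ∈ range n, 1 / ((j : ℝ) + 1) := by
  rw [H, ← Ico_add_one_right_eq_Icc, sum_Ico_eq_sum_range]
  simp [add_comm]

theorem hasSum_one_div_succ_mul_succ_add {t : ℕ} (ht : 0 < t) :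
    HasSum (fun j : ℕ => 1 / (((j : ℝ) + 1) * ((j : ℝ) + 1 + t))) (H 1 t / t) := by
  simpa [H_one_eq_sum_range, add_comm] using hasSum_one_div_mul_add_nat one_pos ht

theorem hasSum_one_div_succ_sq :
    HasSum (fun j : ℕ => 1 / (((j : ℝ) + 1) * ((j : ℝ) + 1))) (π ^ 2 / 6) := by
  simpa [← sq] using (hasSum_nat_add_iff' 1).2 hasSum_zeta_two

theorem hasSum_sum_range_one_div_succ_mul_succ_add {i : ℕ} (hi : 0 < i) :
    HasSum (fun j : ℕ => ∑ t ∈ range i, 1 / (((j : ℝ) + 1) * ((j : ℝ) + 1 + t)))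
      (π ^ 2 / 6 + ∑ t ∈ Icc 1 (i - 1), H 1 t / t) := by
  have hIco : Ico 1 i = Icc 1 (i - 1) := by
    rw [← Ico_add_one_right_eq_Icc, Nat.sub_one_add_one hi.ne']
  simp_rw [range_eq_Ico, sum_eq_sum_Ico_succ_bot hi, hIco]
  simpa using hasSum_one_div_succ_sq.add <|
    hasSum_sum fun t ht => hasSum_one_div_succ_mul_succ_add (mem_Icc.1 ht).1

noncomputable def harmonicSummand (i j k : ℕ) : ℝ :=
  if j ≤ k then 1 / ((j : ℝ) + 1) * (1 / (((k : ℝ) + 1) * ((i : ℝ) + ((k : ℝ) + 1)))) else 0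

theorem harmonicSummand_nonneg (i j k : ℕ) : 0 ≤ harmonicSummand i j k := by
  unfold harmonicSummand
  split_ifs <;> positivity

theorem tsum_harmonicSummand_left (i k : ℕ) :
    ∑' j, harmonicSummand i j k = H 1 (k + 1) / (((k : ℝ) + 1) * ((i : ℝ) + ((k : ℝ) + 1))) := by
  rw [tsum_eq_sum (s := range (k + 1)) fun j hj => by
      rw [harmonicSummand, if_neg (by simpa using hj)],
    H_one_eq_sum_range, sum_div]
  refine sum_congr rfl fun j hj => ?_
  rw [harmonicSummand, if_pos (Nat.lt_succ_iff.1 (mem_range.1 hj)), mul_one_div]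

theorem hasSum_harmonicSummand_right {i : ℕ} (hi : 0 < i) (j : ℕ) :
    HasSum (harmonicSummand i j)
      ((∑ t ∈ range i, 1 / (((j : ℝ) + 1) * ((j : ℝ) + 1 + t))) / i) := by
  have hshift : HasSum (fun m => harmonicSummand i j (m + j))
      ((∑ t ∈ range i, 1 / (((j : ℝ) + 1) * ((j : ℝ) + 1 + t))) / i) := by
    have h := (hasSum_one_div_mul_add_nat (a := (j : ℝ) + 1) (by positivity) hi).mul_left
      (1 / ((j : ℝ) + 1))
    rw [← mul_div_assoc, mul_sum] at h
    simp_rw [one_div_mul_one_div] at h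
    refine h.congr_fun fun m => ?_
    rw [harmonicSummand, if_pos (Nat.le_add_left j m)]
    push_cast
    rw [one_div_mul_one_div]
    ring
  have hhead : ∑ k ∈ range j, harmonicSummand i j k = 0 :=
    sum_eq_zero fun k hk => if_neg (by simpa using hk)
  exact (hasSum_nat_add_iff' j).1 (by simpa [hhead] using hshift)

theorem summable_uncurry_harmonicSummand {i : ℕ} (hi : 0 < i) :
    Summable (Function.uncurry (harmonicSummand i)) := by
  refine (summable_prod_of_nonneg fun p => harmonicSummand_nonneg i p.1 p.2).2
    ⟨fun j => (hasSum_harmonicSummand_right hi j).summable, ?_⟩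
  simp_rw [(hasSum_harmonicSummand_right hi _).tsum_eq]
  exact ((hasSum_sum_range_one_div_succ_mul_succ_add hi).div_const _).summable

theorem stmt5 (i : ℕ) (hi : 0 < i) :
    ∑' k : ℕ, H 1 (k + 1) / (((k : ℝ) + 1) * ((i : ℝ) + ((k : ℝ) + 1))) =
      (π ^ 2 / 6) / i + (1 / i) * ∑ k ∈ Finset.Icc 1 (i - 1), H 1 k / k := by
  calc ∑' k : ℕ, H 1 (k + 1) / (((k : ℝ) + 1) * ((i : ℝ) + ((k : ℝ) + 1)))
      = ∑' (k : ℕ) (j : ℕ), harmonicSummand i j k :=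
        tsum_congr fun k => (tsum_harmonicSummand_left i k).symm
    _ = ∑' (j : ℕ) (k : ℕ), harmonicSummand i j k :=
        (summable_uncurry_harmonicSummand hi).tsum_comm
    _ = (π ^ 2 / 6 + ∑ k ∈ Icc 1 (i - 1), H 1 k / k) / i := by
        simp_rw [(hasSum_harmonicSummand_right hi _).tsum_eq]
        exact ((hasSum_sum_range_one_div_succ_mul_succ_add hi).div_const _).tsum_eq
    _ = (π ^ 2 / 6) / i + (1 / i) * ∑ k ∈ Finset.Icc 1 (i - 1), H 1 k / k := by ring
end

section
/- $\sum_{k=1}^{\infty} \left( \frac{h_k^{(2)}}{(2k-1)^6} + \frac{h_k^{(6)}}{(2k-1)^2} \right) = \frac{285}{128}\zeta(8)$. -/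
open Real

open Finset

/-! With `a k = 1 / (2k+1)^2` and `b k = 1 / (2k+1)^6`, the `k`-th term is `A_k b_k + B_k a_k`,
where `A_k`, `B_k` are the partial sums up to index `k`. Summation by parts (the discrete product
rule for `A_n B_n`) turns the series into `(∑ a) (∑ b) + ∑ a b = λ(2) λ(6) + λ(8)`, where
`λ(s) = (1 - 2^{-s}) ζ(s)` is the sum over odd integers, and the Euler values of `ζ(2)`, `ζ(6)`,
`ζ(8)` finish the computation. -/

theorem bernoulli'_six : bernoulli' 6 = 1 / 42 := by
  rw [bernoulli'_def]
  norm_num [sum_range_succ, Nat.choose, bernoulli'_eq_zero_of_odd (by decide : Odd 5)]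

theorem bernoulli'_eight : bernoulli' 8 = -1 / 30 := by
  rw [bernoulli'_def]
  norm_num [sum_range_succ, Nat.choose, bernoulli'_six, bernoulli'_eq_zero_of_odd (by decide : Odd 5),
    bernoulli'_eq_zero_of_odd (by decide : Odd 7)]

theorem hasSum_zeta_six : HasSum (fun n : ℕ => (1 : ℝ) / (n : ℝ) ^ 6) (π ^ 6 / 945) := by
  convert! hasSum_zeta_nat (k := 3) (by norm_num) using 1
  rw [bernoulli_eq_bernoulli'_of_ne_one (by decide), bernoulli'_six]
  norm_num [Nat.factorial]
  ring

theorem hasSum_zeta_eight : HasSum (fun n : ℕ => (1 : ℝ) / (n : ℝ) ^ 8) (π ^ 8 / 9450) := by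
  convert! hasSum_zeta_nat (k := 4) (by norm_num) using 1
  rw [bernoulli_eq_bernoulli'_of_ne_one (by decide), bernoulli'_eight]
  norm_num [Nat.factorial]
  ring

theorem hasSum_one_div_odd_pow {s : ℕ} {Z : ℝ}
    (hZ : HasSum (fun n : ℕ => 1 / (n : ℝ) ^ s) Z) :
    HasSum (fun k : ℕ => 1 / (2 * (k : ℝ) + 1) ^ s) ((1 - (2 : ℝ)⁻¹ ^ s) * Z) := by
  have hEven : HasSum (fun k : ℕ => 1 / ((2 * k : ℕ) : ℝ) ^ s) ((2 : ℝ)⁻¹ ^ s * Z) := by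
    simpa [mul_pow, mul_comm] using hZ.mul_left ((2 : ℝ)⁻¹ ^ s)
  have hInj : Function.Injective fun k : ℕ => 2 * k + 1 := fun x y hxy => by simpa using hxy
  obtain ⟨L, hOdd⟩ := hZ.summable.comp_injective hInj
  have hL : L = (1 - (2 : ℝ)⁻¹ ^ s) * Z := by
    have := (HasSum.even_add_odd (f := fun n : ℕ => 1 / (n : ℝ) ^ s) hEven hOdd).unique hZ
    linarith
  subst hL
  simpa [Function.comp_def] using hOdd

theorem sum_range_partialSum_mul_add {R : Type*} [CommRing R] (a b : ℕ → R) (n : ℕ) :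
    ∑ k ∈ range n, ((∑ j ∈ range (k + 1), a j) * b k + (∑ j ∈ range (k + 1), b j) * a k) =
      (∑ j ∈ range n, a j) * (∑ j ∈ range n, b j) + ∑ k ∈ range n, a k * b k := by
  induction n with
  | zero => simp
  | succ n ih =>
    rw [sum_range_succ _ n, ih]
    simp only [sum_range_succ _ n]
    ring

theorem hasSum_partialSum_mul_add {a b : ℕ → ℝ} {A B C : ℝ} (ha0 : ∀ k, 0 ≤ a k)
    (hb0 : ∀ k, 0 ≤ b k) (ha : HasSum a A) (hb : HasSum b B)
    (hab : HasSum (fun k => a k * b k) C) :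
    HasSum (fun k => (∑ j ∈ range (k + 1), a j) * b k + (∑ j ∈ range (k + 1), b j) * a k)
      (A * B + C) := by
  rw [hasSum_iff_tendsto_nat_of_nonneg fun k => add_nonneg
    (mul_nonneg (sum_nonneg fun j _ => ha0 j) (hb0 k)) (mul_nonneg (sum_nonneg fun j _ => hb0 j) (ha0 k))]
  simp_rw [sum_range_partialSum_mul_add]
  exact (ha.tendsto_sum_nat.mul hb.tendsto_sum_nat).add hab.tendsto_sum_nat

theorem h_succ_eq_sum_range (n k : ℕ) :
    h n (k + 1) = ∑ j ∈ range (k + 1), 1 / (2 * (j : ℝ) + 1) ^ n := by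
  rw [h, ← Ico_add_one_right_eq_Icc, sum_Ico_eq_sum_range]
  refine sum_congr rfl fun j _ => ?_
  push_cast
  ring

theorem zeta_eq_of_hasSum {s : ℕ} {Z : ℝ} (hs : s ≠ 0)
    (hZ : HasSum (fun n : ℕ => 1 / (n : ℝ) ^ s) Z) : zeta s = Z := by
  have := (hasSum_nat_add_iff' 1).mpr hZ
  simpa [zeta, hs] using this.tsum_eq

theorem stmt12 :
    ∑' k : ℕ, (h 2 (k + 1) / (2 * ((k : ℝ) + 1) - 1) ^ 6 + h 6 (k + 1) / (2 * ((k : ℝ) + 1) - 1) ^ 2) =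
      285 / 128 * zeta 8 := by
  have hSum := hasSum_partialSum_mul_add (fun _ => by positivity) (fun _ => by positivity)
    (hasSum_one_div_odd_pow hasSum_zeta_two) (hasSum_one_div_odd_pow hasSum_zeta_six)
    (by simpa only [one_div_mul_one_div, ← pow_add, Nat.reduceAdd] using
      hasSum_one_div_odd_pow hasSum_zeta_eight)
  have hTerm : ∀ k : ℕ,
      h 2 (k + 1) / (2 * ((k : ℝ) + 1) - 1) ^ 6 + h 6 (k + 1) / (2 * ((k : ℝ) + 1) - 1) ^ 2 =
        (∑ j ∈ range (k + 1), 1 / (2 * (j : ℝ) + 1) ^ 2) * (1 / (2 * (k : ℝ) + 1) ^ 6) +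
          (∑ j ∈ range (k + 1), 1 / (2 * (j : ℝ) + 1) ^ 6) * (1 / (2 * (k : ℝ) + 1) ^ 2) := by
    intro k
    rw [h_succ_eq_sum_range, h_succ_eq_sum_range]
    ring
  rw [tsum_congr hTerm, hSum.tsum_eq, zeta_eq_of_hasSum (by norm_num) hasSum_zeta_eight]
  ring
end
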